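/- arXiv:2011.12355 — 2 statements merged into one kernel-verified Lean document; each statement's English description precedes it below -/
import Mathlib

section
/- Let H be a real inner product space (e.g. ℝ^n), and let l_m : H → ℝ and l_s : H → ℝ be everywhere differentiable functions such that l_m is convex and its gradient is β-Lipschitz for some β > 0, and such that ‖∇l_m(θ)‖ ≤ G and ‖∇l_s(θ)‖ ≤ G for all θ, where G > 0. Let ε > 0 and set the learning rate η = ε / (β G²). Then for every parameter vector θ satisfying ⟨∇l_m(θ), ∇l_s(θ)⟩ > ε, one step of gradient descent on the self-supervised loss strictly decreases the main loss: l_m(θ − η ∇l_s(θ)) < l_m(θ). -/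
open scoped RealInnerProductSpace NNReal

/-!
The descent lemma for functions with `β`-Lipschitz gradient bounds one gradient step by
`l_m(θ - η g) ≤ l_m(θ) - η ⟪∇l_m(θ), g⟫ + β η² ‖g‖² / 2`. When `⟪∇l_m(θ), g⟫ > ε` and
`‖g‖ ≤ G`, the choice `η = ε / (β G²)` makes the right-hand side at most `l_m(θ) - η ε / 2`.
-/

section DescentLemma

variable {H : Type*} [NormedAddCommGroup H] [InnerProductSpace ℝ H]

theorem HasGradientAt.hasDerivAt_comp_add_smul [CompleteSpace H] {f : H → ℝ} {g : H → H}
    (hf : ∀ y, HasGradientAt f (g y) y) (x v : H) (t : ℝ) :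
    HasDerivAt (fun s : ℝ => f (x + s • v)) ⟪g (x + t • v), v⟫ t := by
  have hline : HasDerivAt (fun s : ℝ => x + s • v) v t := by
    simpa using ((hasDerivAt_id t).smul_const v).const_add x
  have h := (hf (x + t • v)).hasFDerivAt.comp_hasDerivAt t hline
  rwa [InnerProductSpace.toDual_apply_apply] at h

theorem LipschitzWith.inner_sub_le {K : ℝ≥0} {g : H → H} (hg : LipschitzWith K g)
    (x y v : H) : ⟪g y - g x, v⟫ ≤ K * ‖y - x‖ * ‖v‖ := by
  calc ⟪g y - g x, v⟫ ≤ ‖g y - g x‖ * ‖v‖ := real_inner_le_norm _ _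
    _ ≤ K * ‖y - x‖ * ‖v‖ := by
      gcongr
      simpa only [dist_eq_norm] using hg.dist_le_mul y x

theorem le_add_inner_add_of_lipschitzWith_gradient [CompleteSpace H] {f : H → ℝ} {g : H → H}
    {K : ℝ≥0}
    (hf : ∀ y, HasGradientAt f (g y) y) (hg : LipschitzWith K g) (x v : H) :
    f (x + v) ≤ f x + ⟪g x, v⟫ + K / 2 * ‖v‖ ^ 2 := by
  set B : ℝ → ℝ := fun t => f x + t * ⟪g x, v⟫ + t ^ 2 * (K / 2 * ‖v‖ ^ 2)
  have hB : ∀ t, HasDerivAt B (⟪g x, v⟫ + t * (K * ‖v‖ ^ 2)) t := by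
    intro t
    refine ((((hasDerivAt_id t).mul_const ⟪g x, v⟫).const_add (f x)).add
      ((hasDerivAt_pow 2 t).mul_const (K / 2 * ‖v‖ ^ 2))).congr_deriv ?_
    simp only [Nat.cast_ofNat]
    ring
  have hφ := HasGradientAt.hasDerivAt_comp_add_smul hf x v
  have hslope : ∀ t ∈ Set.Ico (0 : ℝ) 1,
      ⟪g (x + t • v), v⟫ ≤ ⟪g x, v⟫ + t * (K * ‖v‖ ^ 2) := by
    intro t ht
    have := hg.inner_sub_le x (x + t • v) v
    rw [add_sub_cancel_left, norm_smul, Real.norm_of_nonneg ht.1, inner_sub_left] at this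
    linarith
  have key := image_le_of_deriv_right_le_deriv_boundary
    (fun t _ => (hφ t).continuousAt.continuousWithinAt)
    (fun t _ => (hφ t).hasDerivWithinAt) (by simp [B])
    (fun t _ => (hB t).continuousAt.continuousWithinAt)
    (fun t _ => (hB t).hasDerivWithinAt) hslope (Set.right_mem_Icc.2 zero_le_one)
  simpa [B] using key

end DescentLemma

theorem lethean_stmt0_general
    {H : Type*} [NormedAddCommGroup H] [InnerProductSpace ℝ H] [CompleteSpace H]
    (lm : H → ℝ) (gm gs : H → H)
    (hgm : ∀ θ : H, HasGradientAt lm (gm θ) θ)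
    (β : ℝ) (hβ : 0 < β)
    (hlip : LipschitzWith β.toNNReal gm)
    (G : ℝ) (hG : 0 < G)
    (hbs : ∀ θ : H, ‖gs θ‖ ≤ G)
    (ε : ℝ) (hε : 0 < ε)
    (η : ℝ) (hη : η = ε / (β * G ^ 2)) :
    ∀ θ : H, ε < ⟪gm θ, gs θ⟫ → lm (θ - η • gs θ) < lm θ := by
  intro θ hcorr
  have hη0 : 0 < η := by rw [hη]; positivity
  have hdescent := le_add_inner_add_of_lipschitzWith_gradient hgm hlip θ (-(η • gs θ))
  rw [← sub_eq_add_neg, Real.coe_toNNReal _ hβ.le, inner_neg_right, real_inner_smul_right,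
    norm_neg, norm_smul, Real.norm_of_nonneg hη0.le] at hdescent
  have hstep : β / 2 * (η * ‖gs θ‖) ^ 2 ≤ η * ε / 2 := by
    calc β / 2 * (η * ‖gs θ‖) ^ 2 ≤ β / 2 * (η * G) ^ 2 := by gcongr; exact hbs θ
      _ = η * ε / 2 := by rw [hη]; field_simp
  linarith [mul_lt_mul_of_pos_left hcorr hη0, mul_pos hη0 hε]

/-- Theorem 1 (test-time training guarantee), with learning rate η = ε/(βG²):
if the main and self-supervised gradients are positively correlated (inner product > ε),
one step of gradient descent on the self-supervised loss strictly decreases the main loss. -/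
theorem lethean_stmt0
    {H : Type*} [NormedAddCommGroup H] [InnerProductSpace ℝ H] [CompleteSpace H]
    (lm ls : H → ℝ) (gm gs : H → H)
    (hgm : ∀ θ : H, HasGradientAt lm (gm θ) θ)
    (hgs : ∀ θ : H, HasGradientAt ls (gs θ) θ)
    (hconv : ConvexOn ℝ Set.univ lm)
    (β : ℝ) (hβ : 0 < β)
    (hlip : LipschitzWith β.toNNReal gm)
    (G : ℝ) (hG : 0 < G)
    (hbm : ∀ θ : H, ‖gm θ‖ ≤ G)
    (hbs : ∀ θ : H, ‖gs θ‖ ≤ G)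
    (ε : ℝ) (hε : 0 < ε)
    (η : ℝ) (hη : η = ε / (β * G ^ 2)) :
    ∀ θ : H, ε < ⟪gm θ, gs θ⟫ → lm (θ - η • gs θ) < lm θ :=
  lethean_stmt0_general lm gm gs hgm β hβ hlip G hG hbs ε hε η hη
end

section
/- Let H be a real inner product space, and let l_m : H → ℝ and l_s : H → ℝ be everywhere differentiable functions such that the gradient of l_m is β-Lipschitz for some β > 0 and ‖∇l_s(θ)‖ ≤ G for all θ, where G > 0. Let ε > 0. Then for every θ with ⟨∇l_m(θ), ∇l_s(θ)⟩ < −ε and every learning rate η satisfying 0 < η < 2ε / (β G²), one step of gradient descent on the self-supervised loss strictly increases the main loss: l_m(θ − η ∇l_s(θ)) > l_m(θ). -/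
open scoped RealInnerProductSpace

/-! The descent lemma for `β`-smooth functions, read as a lower bound: along `v`,
`f (x + v) ≥ f x + ⟪∇f x, v⟫ - β/2 ‖v‖²`. For `v = -η ∇l_s θ` the linear term is
`-η ⟪∇l_m θ, ∇l_s θ⟫ > η ε` while the quadratic loss is at most `β η² G² / 2 < η ε`. -/

theorem LipschitzWith.neg_mul_le_inner_sub {H : Type*} [NormedAddCommGroup H]
    [InnerProductSpace ℝ H] {g : H → H} {K : NNReal} (hg : LipschitzWith K g)
    (x y v : H) : -(K * ‖y - x‖ * ‖v‖) ≤ ⟪g y - g x, v⟫ := by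
  have hgyx : ‖g y - g x‖ ≤ K * ‖y - x‖ := by
    simpa only [dist_eq_norm] using hg.dist_le_mul y x
  calc -(K * ‖y - x‖ * ‖v‖) ≤ -(‖g y - g x‖ * ‖v‖) := by gcongr
    _ ≤ ⟪g y - g x, v⟫ := neg_le_of_abs_le (abs_real_inner_le_norm _ _)

/-- `φ t = f (x + t • v) - t ⟪g x, v⟫ + K/2 t² ‖v‖²` has derivative
`⟪g (x + t • v) - g x, v⟫ + K t ‖v‖²`, nonnegative for `t ≥ 0` by the Lipschitz bound,
so `φ 0 ≤ φ 1`. -/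
theorem le_apply_add_of_hasGradientAt_of_lipschitzWith {H : Type*} [NormedAddCommGroup H]
    [InnerProductSpace ℝ H] [CompleteSpace H] {f : H → ℝ} {g : H → H} {K : NNReal}
    (hf : ∀ x, HasGradientAt f (g x) x) (hg : LipschitzWith K g) (x v : H) :
    f x + ⟪g x, v⟫ - K / 2 * ‖v‖ ^ 2 ≤ f (x + v) := by
  set φ : ℝ → ℝ := fun t => f (x + t • v) - t * ⟪g x, v⟫ + K / 2 * t ^ 2 * ‖v‖ ^ 2
  have hφ : ∀ t : ℝ, HasDerivAt φ (⟪g (x + t • v) - g x, v⟫ + K * t * ‖v‖ ^ 2) t := by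
    intro t
    have hline : HasDerivAt (fun t : ℝ => x + t • v) v t :=
      ((hasDerivAt_id t).smul_const v).const_add x |>.congr_deriv (one_smul ℝ v)
    have hfline := (hf (x + t • v)).hasFDerivAt.comp_hasDerivAt t hline
    rw [InnerProductSpace.toDual_apply_apply] at hfline
    refine ((hfline.sub ((hasDerivAt_id t).mul_const ⟪g x, v⟫)).add
      (((hasDerivAt_pow 2 t).const_mul (K / 2 : ℝ)).mul_const (‖v‖ ^ 2))).congr_deriv ?_
    rw [inner_sub_left]
    push_cast
    ring
  have hmono : MonotoneOn φ (Set.Ici 0) := by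
    refine monotoneOn_of_hasDerivWithinAt_nonneg (convex_Ici 0)
      (fun t _ => (hφ t).continuousAt.continuousWithinAt)
      (fun t _ => (hφ t).hasDerivWithinAt) fun t ht => ?_
    rw [interior_Ici, Set.mem_Ioi] at ht
    have hbound := hg.neg_mul_le_inner_sub x (x + t • v) v
    rw [add_sub_cancel_left, norm_smul, Real.norm_of_nonneg ht.le] at hbound
    nlinarith
  have h01 : φ 0 ≤ φ 1 := hmono Set.self_mem_Ici (Set.mem_Ici.mpr zero_le_one) zero_le_one
  have hφ0 : φ 0 = f x := by simp [φ]
  have hφ1 : φ 1 = f (x + v) - ⟪g x, v⟫ + K / 2 * ‖v‖ ^ 2 := by simp [φ]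
  linarith

theorem lethean_stmt6_general
    {H : Type*} [NormedAddCommGroup H] [InnerProductSpace ℝ H] [CompleteSpace H]
    (lm : H → ℝ) (gm gs : H → H)
    (hgm : ∀ θ : H, HasGradientAt lm (gm θ) θ)
    (β : ℝ) (hβ : 0 < β)
    (hlip : LipschitzWith β.toNNReal gm)
    (G : ℝ) (hG : 0 < G)
    (hbs : ∀ θ : H, ‖gs θ‖ ≤ G)
    (ε : ℝ) :
    ∀ θ : H, ⟪gm θ, gs θ⟫ < -ε →
      ∀ η : ℝ, 0 < η → η < 2 * ε / (β * G ^ 2) →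
        lm θ < lm (θ - η • gs θ) := by
  intro θ hneg η hη hηlt
  have hdescent := le_apply_add_of_hasGradientAt_of_lipschitzWith hgm hlip θ (-(η • gs θ))
  rw [← sub_eq_add_neg, inner_neg_right, real_inner_smul_right, norm_neg, norm_smul,
    Real.norm_of_nonneg hη.le, Real.coe_toNNReal β hβ.le] at hdescent
  have hstep : η * (β * G ^ 2) < 2 * ε := (lt_div_iff₀ (by positivity)).mp hηlt
  have hgs_sq : ‖gs θ‖ ^ 2 ≤ G ^ 2 := pow_le_pow_left₀ (norm_nonneg _) (hbs θ) 2
  nlinarith [mul_le_mul_of_nonneg_left hgs_sq (by positivity : 0 ≤ β * η ^ 2)]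

/-- Lethean attack rationale (equation (3) of the paper): if the main and
self-supervised gradients are negatively correlated (inner product < −ε), then for
any learning rate 0 < η < 2ε/(βG²), one step of gradient descent on the
self-supervised loss strictly increases the main loss. -/
theorem lethean_stmt6
    {H : Type*} [NormedAddCommGroup H] [InnerProductSpace ℝ H] [CompleteSpace H]
    (lm ls : H → ℝ) (gm gs : H → H)
    (hgm : ∀ θ : H, HasGradientAt lm (gm θ) θ)
    (hgs : ∀ θ : H, HasGradientAt ls (gs θ) θ)
    (β : ℝ) (hβ : 0 < β)
    (hlip : LipschitzWith β.toNNReal gm)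
    (G : ℝ) (hG : 0 < G)
    (hbs : ∀ θ : H, ‖gs θ‖ ≤ G)
    (ε : ℝ) (hε : 0 < ε) :
    ∀ θ : H, ⟪gm θ, gs θ⟫ < -ε →
      ∀ η : ℝ, 0 < η → η < 2 * ε / (β * G ^ 2) →
        lm θ < lm (θ - η • gs θ) :=
  lethean_stmt6_general lm gm gs hgm β hβ hlip G hG hbs ε
end
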